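/- Fix h ∈ ℂ and r ∈ ℂ. On A = ℂ[x⁰,x¹,x²,x³] with p_μ := −i∂_μ, define the right-handed Jordanian operators x̂⁰_{R,r} := x⁰∘(1 − rh·p₀) + h·Σ_{k=1}^{3} x^k∘p_k and x̂^j_{R,r} := x^j (multiplication by x^j) for j = 1,2,3. Then [x̂⁰_{R,r}, x̂^j_{R,r}] = −ih·x̂^j_{R,r} and [x̂^j_{R,r}, x̂^k_{R,r}] = 0 for all j,k ∈ {1,2,3}. -/

import Mathlib

/-! The canonical commutation relations `p_μ x^ν − x^ν p_μ = −i δ_μ^ν` (from the Leibniz rule)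
and the commutativity of the `x^μ` give everything: for `j ≠ 0` the term `x⁰(1 − rh p₀)` commutes
with `x^j`, and in `h Σ_k x^k p_k` only the summand `k = j` fails to commute, contributing
`−ih x^j`. -/

open MvPolynomial

noncomputable section

/-- The multiplication-by-`x^μ` operator on `ℂ[x⁰,x¹,x²,x³]`. -/
def Xop (μ : Fin 4) : Module.End ℂ (MvPolynomial (Fin 4) ℂ) :=
  LinearMap.mulLeft ℂ (X μ)

/-- The partial-derivative operator `∂_μ` on `ℂ[x⁰,x¹,x²,x³]`. -/
def Dop (μ : Fin 4) : Module.End ℂ (MvPolynomial (Fin 4) ℂ) :=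
  (pderiv μ).toLinearMap

/-- The momentum operator `p_μ := −i∂_μ`. -/
def Pop (μ : Fin 4) : Module.End ℂ (MvPolynomial (Fin 4) ℂ) :=
  (-Complex.I) • Dop μ

/-- The right-handed Jordanian operator `x̂⁰_{R,r} := x⁰∘(1 − rh·p₀) + h·Σ_{k=1}^{3} x^k∘p_k`. -/
def xhat0R (r h : ℂ) : Module.End ℂ (MvPolynomial (Fin 4) ℂ) :=
  Xop 0 * (1 - (r * h) • Pop 0) + h • ∑ k ∈ ({1, 2, 3} : Finset (Fin 4)), Xop k * Pop k

theorem Derivation.toLinearMap_mul_mulLeft {R A : Type*} [CommSemiring R] [CommSemiring A]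
    [Algebra R A] (D : Derivation R A A) (a : A) :
    D.toLinearMap * LinearMap.mulLeft R a =
      LinearMap.mulLeft R a * D.toLinearMap + LinearMap.mulLeft R (D a) := by
  ext x
  simp [D.leibniz, mul_comm x]

theorem commute_Xop (μ ν : Fin 4) : Commute (Xop μ) (Xop ν) :=
  (Commute.all (X μ) (X ν)).map (Algebra.lmul ℂ (MvPolynomial (Fin 4) ℂ))

theorem Dop_mul_Xop_self (μ : Fin 4) : Dop μ * Xop μ = Xop μ * Dop μ + 1 := by
  rw [Dop, Xop, Derivation.toLinearMap_mul_mulLeft, pderiv_X_self, LinearMap.mulLeft_one]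
  rfl

theorem commute_Dop_Xop {μ ν : Fin 4} (h : μ ≠ ν) : Commute (Dop μ) (Xop ν) := by
  rw [Commute, SemiconjBy, Dop, Xop, Derivation.toLinearMap_mul_mulLeft, pderiv_X_of_ne h.symm,
    LinearMap.mulLeft_zero_eq_zero, add_zero]

theorem Pop_mul_Xop_self (μ : Fin 4) : Pop μ * Xop μ = Xop μ * Pop μ - Complex.I • 1 := by
  rw [Pop, smul_mul_assoc, Dop_mul_Xop_self, mul_smul_comm]
  module

theorem commute_Pop_Xop {μ ν : Fin 4} (h : μ ≠ ν) : Commute (Pop μ) (Xop ν) :=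
  (commute_Dop_Xop h).smul_left _

theorem commute_Xop_mul_one_sub_smul_Pop {μ ν : Fin 4} (h : μ ≠ ν) (c : ℂ) :
    Commute (Xop μ * (1 - c • Pop μ)) (Xop ν) :=
  (commute_Xop μ ν).mul_left ((Commute.one_left _).sub_left ((commute_Pop_Xop h).smul_left c))

theorem Xop_mul_Pop_mul_Xop_sub (k j : Fin 4) :
    Xop k * Pop k * Xop j - Xop j * (Xop k * Pop k) = if k = j then -Complex.I • Xop j else 0 := by
  split_ifs with h
  · subst h
    rw [mul_assoc, Pop_mul_Xop_self, mul_sub, mul_smul_comm, mul_one, ← mul_assoc]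
    module
  · rw [mul_assoc, (commute_Pop_Xop h).eq, ← mul_assoc, (commute_Xop k j).eq, mul_assoc, sub_self]

theorem sum_Xop_mul_Pop_mul_Xop_sub {s : Finset (Fin 4)} {j : Fin 4} (hj : j ∈ s) :
    (∑ k ∈ s, Xop k * Pop k) * Xop j - Xop j * ∑ k ∈ s, Xop k * Pop k = -Complex.I • Xop j := by
  rw [Finset.sum_mul, Finset.mul_sum, ← Finset.sum_sub_distrib]
  simp only [Xop_mul_Pop_mul_Xop_sub, Finset.sum_ite_eq', hj, if_true]

theorem xhat0R_mul_Xop_sub {j : Fin 4} (hj : j ∈ ({1, 2, 3} : Finset (Fin 4))) (r h : ℂ) :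
    xhat0R r h * Xop j - Xop j * xhat0R r h = (-(Complex.I * h)) • Xop j := by
  have hj0 : (0 : Fin 4) ≠ j := by rintro rfl; simp at hj
  rw [xhat0R, add_mul, mul_add, (commute_Xop_mul_one_sub_smul_Pop hj0 _).eq, smul_mul_assoc,
    mul_smul_comm, add_sub_add_left_eq_sub]
  linear_combination (norm := module) h • sum_Xop_mul_Pop_mul_Xop_sub hj

/-- The right-handed realization of the Jordanian twist satisfies the κ-Minkowski relations
with the opposite sign of the deformation parameter:
`[x̂⁰_{R,r}, x̂^j_{R,r}] = −ih·x̂^j_{R,r}` and `[x̂^j_{R,r}, x̂^k_{R,r}] = 0`. -/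
theorem jordanian_right_realization (r h : ℂ) :
    (∀ j ∈ ({1, 2, 3} : Finset (Fin 4)),
      xhat0R r h * Xop j - Xop j * xhat0R r h = (-(Complex.I * h)) • Xop j) ∧
    (∀ j ∈ ({1, 2, 3} : Finset (Fin 4)), ∀ k ∈ ({1, 2, 3} : Finset (Fin 4)),
      Xop j * Xop k - Xop k * Xop j = 0) :=
  ⟨fun _ hj => xhat0R_mul_Xop_sub hj r h,
    fun j _ k _ => sub_eq_zero.mpr (commute_Xop j k).eq⟩

end
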